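/- Let m = 2 with capacities k_1 ≥ k_2, k_1 + k_2 < n. If a percentile vector v = (v_1, v_2) with v_1 < v_2 satisfies ⌊v_2(n−1)⌋ − ⌊v_1(n−1)⌋ ≥ k_1 + k_2 − 1, then for every input x ∈ [0,1]^n with facility locations y_1 = x_{i_1} ≤ y_2 = x_{i_2} output by PM_v (i_j = ⌊v_j(n−1)⌋+1) and y_1 < y_2, letting r_j be the minimal radius such that the closed ball B_{r_j}(y_j) contains at least k_j agent positions, one has r_1 + r_2 ≤ |y_1 − y_2|, and in every pure Nash Equilibrium of the induced FCFS game: every agent with |x_i − y_j| < r_j for the facility j nearer to it receives utility 1 − |x_i − y_j|, every agent outside B_{r_1}(y_1) ∪ B_{r_2}(y_2) receives utility 0, and the total utility contributed by agents at distance exactly r_j from y_j is the same across all pure Nash Equilibria; hence all pure Nash Equilibria yield the same Social Welfare. -/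

import Mathlib

open scoped Classical

noncomputable section

/-- Agent `i'` precedes agent `i` at a facility located at `y`: it is strictly closer,
or equally close with higher priority (smaller index). -/
def Prec {n : ℕ} (x : Fin n → ℝ) (y : ℝ) (i' i : Fin n) : Prop :=
  |x i' - y| < |x i - y| ∨ (|x i' - y| = |x i - y| ∧ i' < i)

/-- Utility of agent `i` in the FCFS game: positions `x`, facility locations `y`,
capacities `k`, strategy profile `s`.  Agent `i` is served by facility `s i` iff fewer
than `k (s i)` agents selecting `s i` precede it. -/
def utility {n m : ℕ} (x : Fin n → ℝ) (y : Fin m → ℝ) (k : Fin m → ℕ)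
    (s : Fin n → Fin m) (i : Fin n) : ℝ :=
  if {i' | s i' = s i ∧ Prec x (y (s i)) i' i}.ncard < k (s i)
  then 1 - |x i - y (s i)| else 0

/-- Pure Nash equilibrium of the FCFS game. -/
def isNE {n m : ℕ} (x : Fin n → ℝ) (y : Fin m → ℝ) (k : Fin m → ℕ)
    (s : Fin n → Fin m) : Prop :=
  ∀ (i : Fin n) (j : Fin m),
    utility x y k (Function.update s i j) i ≤ utility x y k s i

/-- Social welfare of a strategy profile. -/
def SW {n m : ℕ} (x : Fin n → ℝ) (y : Fin m → ℝ) (k : Fin m → ℕ)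
    (s : Fin n → Fin m) : ℝ :=
  ∑ i, utility x y k s i

def InUnit {N : ℕ} (x : Fin N → ℝ) : Prop := ∀ i, x i ∈ Set.Icc (0 : ℝ) 1

/-- The `i`-th (0-based) smallest entry of `x` (junk value `0` out of range). -/
def sortedVal {n : ℕ} (x : Fin n → ℝ) (i : ℕ) : ℝ :=
  if h : i < n then x (Tuple.sort x ⟨i, h⟩) else 0

/-- The 1-based index `⌊(n-1)v⌋ + 1` used by the percentile mechanism. -/
def percIdx (n : ℕ) (v : ℝ) : ℕ := ⌊((n : ℝ) - 1) * v⌋.toNat + 1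

/-- The location selected by the percentile `v`: the `(⌊(n-1)v⌋+1)`-th sorted report. -/
def percLoc {n : ℕ} (x : Fin n → ℝ) (v : ℝ) : ℝ :=
  sortedVal x (⌊((n : ℝ) - 1) * v⌋.toNat)

/-- The percentile mechanism induced by the percentile vector `v`. -/
def PM {n m : ℕ} (v : Fin m → ℝ) : (Fin n → ℝ) → Fin m → ℝ :=
  fun x j => percLoc x (v j)

/-- A mechanism is Equilibrium Stable if on every instance all pure Nash equilibria of the
induced FCFS game yield the same Social Welfare. -/
def EquilibriumStable {n m : ℕ} (k : Fin m → ℕ)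
    (M : (Fin n → ℝ) → Fin m → ℝ) : Prop :=
  ∀ x, InUnit x → ∀ s s', isNE x (M x) k s → isNE x (M x) k s' →
    SW x (M x) k s = SW x (M x) k s'

/-- A mechanism is absolutely truthful if no agent can increase its best-response utility
by misreporting, whatever the fixed strategies of the others. -/
def AbsolutelyTruthful {n m : ℕ} (k : Fin m → ℕ)
    (M : (Fin n → ℝ) → Fin m → ℝ) : Prop :=
  ∀ x, InUnit x → ∀ (i : Fin n) (x' : ℝ), x' ∈ Set.Icc (0 : ℝ) 1 →
    ∀ s : Fin n → Fin m,
      (⨆ si : Fin m, utility x (M (Function.update x i x')) k (Function.update s i si) i) ≤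
      (⨆ si : Fin m, utility x (M x) k (Function.update s i si) i)

/-- Optimal Social Welfare over facility locations in `[0,1]^m` and Nash equilibria. -/
def SWopt {n m : ℕ} (k : Fin m → ℕ) (x : Fin n → ℝ) : ℝ :=
  sSup {w | ∃ y : Fin m → ℝ, InUnit y ∧ ∃ s, isNE x y k s ∧ w = SW x y k s}

/-- Social Welfare achieved by a mechanism (common value over all NE for ES mechanisms). -/
def SWmech {n m : ℕ} (k : Fin m → ℕ) (M : (Fin n → ℝ) → Fin m → ℝ)
    (x : Fin n → ℝ) : ℝ :=
  sSup {w | ∃ s, isNE x (M x) k s ∧ w = SW x (M x) k s}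

/-- Approximation ratio of a mechanism. -/
def approxRatio {n m : ℕ} (k : Fin m → ℕ) (M : (Fin n → ℝ) → Fin m → ℝ) : ℝ :=
  sSup {r | ∃ x : Fin n → ℝ, InUnit x ∧ r = SWopt k x / SWmech k M x}

end

/-!
Write `B_j` and `B°_j` for the closed and open balls of radius `r_j` around `y_j`. At least
`k₁ + k₂` agents lie in `[y₁, y₂]`, where the distances to the two facilities add up to
`y₂ - y₁`; since `B°_j` holds fewer than `k_j` agents, the two open balls cannot cover this
interval, so `r₁ + r₂ ≤ y₂ - y₁` and `B_j` is disjoint from `B°_{j'}`.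

In a Nash equilibrium with `r_j < 1`, at least `k_j` agents of `B_j` select `j`. Otherwise an
agent of `B_j` selecting the other facility `j'` could be served at `j`, and comparing it with
the agents it could displace shows that it lies on the sphere of radius `r_{j'}` and that the
gap is tight; counting the agents of `B_j ∪ B°_{j'}` against `k_j + k_{j'}` then gives a
contradiction. It follows that agents in `B°_j` are served by `j`, that nobody gets positive
utility outside the ball of its facility, and that `j` serves exactly `k_j` agents of `B_j`, of
which `k_j - |B°_j|` lie on its sphere with utility `1 - r_j`. Thus the boundary agents contribute
`∑_j (k_j - |B°_j|)(1 - r_j)` in every equilibrium, and everybody else's utility is fixed.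
-/

namespace FCFS

open Set

variable {n m : ℕ}

section Queue

variable {x : Fin n → ℝ} {c : ℝ}

def precKey (x : Fin n → ℝ) (c : ℝ) (i : Fin n) : ℝ ×ₗ Fin n := toLex (|x i - c|, i)

theorem prec_iff_precKey_lt {i' i : Fin n} : Prec x c i' i ↔ precKey x c i' < precKey x c i := by
  rw [precKey, precKey, Prod.Lex.lt_iff]; rfl

theorem Prec.irrefl (i : Fin n) : ¬ Prec x c i i := fun h =>
  lt_irrefl _ (prec_iff_precKey_lt.1 h)

theorem Prec.abs_sub_le {i' i : Fin n} (h : Prec x c i' i) : |x i' - c| ≤ |x i - c| :=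
  h.elim le_of_lt fun h => h.1.le

end Queue

def ahead (x : Fin n → ℝ) (y : Fin m → ℝ) (s : Fin n → Fin m) (j : Fin m) (i : Fin n) :
    Set (Fin n) :=
  {i' | s i' = j ∧ Prec x (y j) i' i}

def served (x : Fin n → ℝ) (y : Fin m → ℝ) (K : Fin m → ℕ) (s : Fin n → Fin m) (j : Fin m) :
    Set (Fin n) :=
  {i | s i = j ∧ (ahead x y s j i).ncard < K j}

section Game

variable {x : Fin n → ℝ} {y : Fin m → ℝ} {K : Fin m → ℕ} {s : Fin n → Fin m} {i : Fin n}
  {j : Fin m}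

theorem subset_ahead (i : Fin n) :
    {a | |x a - y j| < |x i - y j| ∧ s a = j} ⊆ ahead x y s j i :=
  fun _ ha => ⟨ha.2, Or.inl ha.1⟩

theorem ahead_subset_ahead {a : Fin n} (h : |x a - y j| < |x i - y j|) :
    ahead x y s j a ⊆ ahead x y s j i :=
  fun _ hp => subset_ahead i ⟨(Prec.abs_sub_le hp.2).trans_lt h, hp.1⟩

theorem ncard_ahead_lt_of_precKey_lt {a b : Fin n} (ha : s a = j)
    (hab : precKey x (y j) a < precKey x (y j) b) :
    (ahead x y s j a).ncard < (ahead x y s j b).ncard := by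
  refine ncard_lt_ncard ((ssubset_iff_of_subset fun p hp => ?_).2 ?_)
  · exact ⟨hp.1, prec_iff_precKey_lt.2 ((prec_iff_precKey_lt.1 hp.2).trans hab)⟩
  · exact ⟨a, ⟨ha, prec_iff_precKey_lt.2 hab⟩, fun h => Prec.irrefl a h.2⟩

theorem ncard_served_le (j : Fin m) : (served x y K s j).ncard ≤ K j := by
  have hinj : InjOn (fun i => (ahead x y s j i).ncard) (served x y K s j) := by
    intro a ha b hb hab
    by_contra hne
    have hkey : precKey x (y j) a ≠ precKey x (y j) b := fun h =>
      hne (congrArg (fun p => (ofLex p).2) h)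
    rcases hkey.lt_or_gt with h | h
    · exact (ncard_ahead_lt_of_precKey_lt ha.1 h).ne hab
    · exact (ncard_ahead_lt_of_precKey_lt hb.1 h).ne hab.symm
  simpa using ncard_le_ncard_of_injOn _ (fun i hi => (mem_Iio.2 hi.2)) hinj (finite_Iio (K j))

theorem utility_of_mem_served (h : i ∈ served x y K s j) :
    utility x y K s i = 1 - |x i - y j| := by
  obtain ⟨rfl, h⟩ := h
  exact if_pos h

theorem mem_served_of_utility_ne_zero (h : utility x y K s i ≠ 0) :
    i ∈ served x y K s (s i) ∧ |x i - y (s i)| ≠ 1 := by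
  unfold utility at h
  split_ifs at h with hlt
  · exact ⟨⟨rfl, hlt⟩, fun he => h (by rw [he, sub_self])⟩
  · exact absurd rfl h

theorem utility_update_self (i : Fin n) (j : Fin m) :
    utility x y K (Function.update s i j) i
      = if (ahead x y s j i).ncard < K j then 1 - |x i - y j| else 0 := by
  have hahead : ahead x y (Function.update s i j) j i = ahead x y s j i := by
    ext a
    rcases eq_or_ne a i with rfl | ha
    · simp [ahead, Prec.irrefl]
    · simp [ahead, Function.update_of_ne ha]
  show (if (ahead x y _ (Function.update s i j i) i).ncard < _ then _ else _) = _
  rw [Function.update_self, hahead]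

theorem mem_served_of_ncard_lt {ρ : ℝ} {a : Fin n}
    (h : {b | |x b - y j| ≤ ρ ∧ b ∈ served x y K s j}.ncard < K j)
    (ha : |x a - y j| ≤ ρ) (hsa : s a = j) : a ∈ served x y K s j := by
  by_contra hna
  obtain ⟨b, ⟨hbρ, hbj, hbn⟩, hmin⟩ :=
    exists_min_image {b | |x b - y j| ≤ ρ ∧ s b = j ∧ b ∉ served x y K s j}
      (precKey x (y j)) (toFinite _) ⟨a, ha, hsa, hna⟩
  -- everyone ahead of the first unserved agent is served
  refine hbn ⟨hbj, (ncard_le_ncard fun p hp => ?_).trans_lt h⟩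
  refine ⟨(Prec.abs_sub_le hp.2).trans hbρ, by_contra fun hpn => ?_⟩
  exact (hmin p ⟨(Prec.abs_sub_le hp.2).trans hbρ, hp.1, hpn⟩).not_gt (prec_iff_precKey_lt.1 hp.2)

theorem isNE.mem_served_of_ncard_ahead_lt (hs : isNE x y K s)
    (h : (ahead x y s j i).ncard < K j) (hd : |x i - y j| < 1) :
    i ∈ served x y K s (s i) ∧ |x i - y (s i)| ≤ |x i - y j| := by
  have hdev : 1 - |x i - y j| ≤ utility x y K s i := by
    simpa [utility_update_self, h] using hs i j
  have hserved := (mem_served_of_utility_ne_zero (by linarith : utility x y K s i ≠ 0)).1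
  rw [utility_of_mem_served hserved] at hdev
  exact ⟨hserved, by linarith⟩

end Game

theorem fin_two_eq_of_ne {j j' z : Fin 2} (hj : j ≠ j') (hz : z ≠ j') : z = j := by omega

theorem fin_two_add_of_ne {M : Type*} [AddCommMonoid M] (f : Fin 2 → M) {j j' : Fin 2}
    (hj : j ≠ j') : f j + f j' = f 0 + f 1 := by
  fin_cases j <;> fin_cases j' <;> simp_all [add_comm]

structure IsCriticalRadius (d : Fin n → ℝ) (k : ℕ) (ρ : ℝ) : Prop where
  ncard_lt : {i | d i < ρ}.ncard < k
  le_ncard : k ≤ {i | d i ≤ ρ}.ncard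

theorem IsCriticalRadius.le_of_forall_le {d : Fin n → ℝ} {k : ℕ} {ρ c : ℝ}
    (h : IsCriticalRadius d k ρ) (hd : ∀ i, d i ≤ c) : ρ ≤ c := by
  by_contra! hc
  have huniv : {i | d i < ρ} = univ := eq_univ_of_forall fun i => (hd i).trans_lt hc
  have := h.ncard_lt
  rw [huniv] at this
  exact (h.le_ncard.trans (ncard_le_ncard (subset_univ _))).not_gt this

section TwoFacilities

variable {x : Fin n → ℝ} {y : Fin 2 → ℝ} {K : Fin 2 → ℕ} {r : Fin 2 → ℝ}
  {s s' : Fin n → Fin 2} {i : Fin n} {j j' : Fin 2}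

theorem sub_le_abs_add_abs (i : Fin n) (hj : j ≠ j') :
    y 1 - y 0 ≤ |x i - y j| + |x i - y j'| := by
  rw [fin_two_add_of_ne (fun j => |x i - y j|) hj]
  linarith [le_abs_self (x i - y 0), neg_abs_le (x i - y 1)]

theorem abs_add_abs_of_mem_Icc (hi : x i ∈ Icc (y 0) (y 1)) (hj : j ≠ j') :
    |x i - y j| + |x i - y j'| = y 1 - y 0 := by
  rw [fin_two_add_of_ne (fun j => |x i - y j|) hj, abs_of_nonneg (sub_nonneg.2 hi.1),
    abs_of_nonpos (sub_nonpos.2 hi.2)]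
  ring

structure WideGapConfig (x : Fin n → ℝ) (y : Fin 2 → ℝ) (K : Fin 2 → ℕ) (r : Fin 2 → ℝ) :
    Prop where
  abs_sub_le_one : ∀ i j, |x i - y j| ≤ 1
  isCriticalRadius : ∀ j, IsCriticalRadius (fun i => |x i - y j|) (K j) (r j)
  le_ncard_Icc : K 0 + K 1 ≤ {i | x i ∈ Icc (y 0) (y 1)}.ncard

namespace WideGapConfig

variable (h : WideGapConfig x y K r)
include h

theorem ncard_openBall_lt (j : Fin 2) : {i | |x i - y j| < r j}.ncard < K j :=
  (h.isCriticalRadius j).ncard_lt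

theorem le_ncard_closedBall (j : Fin 2) : K j ≤ {i | |x i - y j| ≤ r j}.ncard :=
  (h.isCriticalRadius j).le_ncard

theorem radius_le_one (j : Fin 2) : r j ≤ 1 :=
  (h.isCriticalRadius j).le_of_forall_le (h.abs_sub_le_one · j)

theorem radius_add_le : r 0 + r 1 ≤ y 1 - y 0 := by
  by_contra! hlt
  have hcover : {i | x i ∈ Icc (y 0) (y 1)} ⊆
      {i | |x i - y 0| < r 0} ∪ {i | |x i - y 1| < r 1} := by
    intro i hi
    have := abs_add_abs_of_mem_Icc hi (by decide : (0 : Fin 2) ≠ 1)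
    by_contra! hn
    simp only [mem_union, mem_ofPred_eq, not_or, not_lt] at hn
    linarith
  have := (ncard_le_ncard hcover).trans (ncard_union_le _ _)
  have := h.le_ncard_Icc
  have := h.ncard_openBall_lt 0
  have := h.ncard_openBall_lt 1
  omega

theorem add_le_abs_add_abs (i : Fin n) (hj : j ≠ j') :
    r j + r j' ≤ |x i - y j| + |x i - y j'| := by
  rw [fin_two_add_of_ne r hj]
  exact h.radius_add_le.trans (sub_le_abs_add_abs i hj)

theorem not_exists_eq_of_lt (hi : |x i - y j| < r j) : ¬ ∃ j', |x i - y j'| = r j' := by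
  rintro ⟨j', hj'⟩
  rcases eq_or_ne j j' with rfl | hj
  · exact hi.ne hj'
  · linarith [h.add_le_abs_add_abs i hj]

theorem le_ncard_closedBall_add_ncard_openBall (htight : r 0 + r 1 = y 1 - y 0) (hj : j ≠ j') :
    K j + K j' ≤ {i | |x i - y j| ≤ r j}.ncard + {i | |x i - y j'| < r j'}.ncard := by
  have hcover : {i | x i ∈ Icc (y 0) (y 1)} ⊆
      {i | |x i - y j| ≤ r j} ∪ {i | |x i - y j'| < r j'} := by
    intro i hi
    have := abs_add_abs_of_mem_Icc hi hj
    have := fin_two_add_of_ne r hj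
    by_contra! hn
    simp only [mem_union, mem_ofPred_eq, not_or, not_le, not_lt] at hn
    linarith
  rw [fin_two_add_of_ne K hj]
  exact h.le_ncard_Icc.trans ((ncard_le_ncard hcover).trans (ncard_union_le _ _))

variable (hs : isNE x y K s)
include hs

theorem lt_abs_sub_of_mem_served (hj : j ≠ j') (hi : i ∈ served x y K s j')
    (hout : r j' < |x i - y j'|) (hle : |x i - y j'| ≤ |x i - y j|) : r j < |x i - y j| := by
  by_contra! hin
  obtain ⟨b, hb, hsb⟩ : ∃ b, |x b - y j'| ≤ r j' ∧ s b ≠ j' := by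
    by_contra! hall
    have hsub : {b | |x b - y j'| ≤ r j'} ⊆ ahead x y s j' i :=
      fun b hb => subset_ahead i ⟨hb.trans_lt hout, hall b hb⟩
    exact (h.le_ncard_closedBall j').not_gt ((ncard_le_ncard hsub).trans_lt hi.2)
  -- `b` could take the place of `i` at `j'`, so it is served at `j` no farther away
  obtain ⟨-, hbd⟩ := isNE.mem_served_of_ncard_ahead_lt hs
    ((ncard_le_ncard (ahead_subset_ahead (hb.trans_lt hout))).trans_lt hi.2)
    (by linarith [h.abs_sub_le_one i j'])
  rw [fin_two_eq_of_ne hj hsb] at hbd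
  linarith [h.add_le_abs_add_abs b hj]

theorem mem_served_of_abs_sub_lt (hi : |x i - y j| < r j) : i ∈ served x y K s j := by
  have hahead : (ahead x y s j i).ncard < K j :=
    (ncard_le_ncard fun a ha => (Prec.abs_sub_le ha.2).trans_lt hi).trans_lt
      (h.ncard_openBall_lt j)
  obtain ⟨hserved, hle⟩ :=
    isNE.mem_served_of_ncard_ahead_lt hs hahead (hi.trans_le (h.radius_le_one j))
  by_cases hsi : s i = j
  · exact hsi ▸ hserved
  · have hj : j ≠ s i := Ne.symm hsi
    have hout : r (s i) < |x i - y (s i)| := by linarith [h.add_le_abs_add_abs i hj]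
    exact absurd (h.lt_abs_sub_of_mem_served hs hj hserved hout hle) hi.not_gt

theorem utility_eq_of_abs_sub_lt (hi : |x i - y j| < r j) :
    utility x y K s i = 1 - |x i - y j| :=
  utility_of_mem_served (h.mem_served_of_abs_sub_lt hs hi)

theorem mem_served_of_mem_closedBall (hj : j ≠ j') {a : Fin n} (hsa : s a = j')
    (ha : |x a - y j| ≤ r j) (ha1 : |x a - y j| < 1) (hahead : (ahead x y s j a).ncard < K j) :
    a ∈ served x y K s j' ∧ |x a - y j'| = r j' ∧ r 0 + r 1 = y 1 - y 0 := by
  obtain ⟨hserved, hle⟩ := isNE.mem_served_of_ncard_ahead_lt hs hahead ha1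
  rw [hsa] at hserved hle
  have hin : |x a - y j'| ≤ r j' := not_lt.1 fun hout =>
    (h.lt_abs_sub_of_mem_served hs hj hserved hout hle).not_ge ha
  have := h.radius_add_le
  have := sub_le_abs_add_abs (x := x) (y := y) a hj
  have := fin_two_add_of_ne r hj
  exact ⟨hserved, by linarith, by linarith⟩

theorem le_ncard_chosen (hr : r j < 1) : K j ≤ {a | |x a - y j| ≤ r j ∧ s a = j}.ncard := by
  by_contra! hlt
  obtain ⟨j', hj⟩ : ∃ j', j ≠ j' := ⟨j.rev, by fin_cases j <;> decide⟩
  have hX : ∀ a ∈ {a | |x a - y j| ≤ r j} \ {a | s a = j},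
      a ∈ served x y K s j' ∧ |x a - y j'| = r j' ∧ r 0 + r 1 = y 1 - y 0 := by
    rintro a ⟨ha, hsa⟩
    have hahead : ahead x y s j a ⊆ {a | |x a - y j| ≤ r j ∧ s a = j} :=
      fun p hp => ⟨(Prec.abs_sub_le hp.2).trans ha, hp.1⟩
    exact h.mem_served_of_mem_closedBall hs hj (fin_two_eq_of_ne hj.symm hsa) ha
      (ha.trans_lt hr) ((ncard_le_ncard hahead).trans_lt hlt)
  have hsplit : {a | |x a - y j| ≤ r j ∧ s a = j}.ncard
      + ({a | |x a - y j| ≤ r j} \ {a | s a = j}).ncard = {a | |x a - y j| ≤ r j}.ncard :=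
    ncard_inter_add_ncard_sdiff_eq_ncard _ _
  obtain ⟨a, ha⟩ : ({a | |x a - y j| ≤ r j} \ {a | s a = j}).Nonempty := by
    rw [nonempty_iff_ne_empty]
    intro hX0
    rw [hX0, ncard_empty, add_zero] at hsplit
    exact (h.le_ncard_closedBall j).not_gt (hsplit ▸ hlt)
  have hXI : ({a | |x a - y j| ≤ r j} \ {a | s a = j}).ncard
      + {a | |x a - y j'| < r j'}.ncard ≤ K j' := by
    rw [← ncard_union_eq (disjoint_left.2 fun b hbX hbI => hbI.ne (hX b hbX).2.1)]
    exact (ncard_le_ncard (union_subset (fun b hb => (hX b hb).1)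
      fun b hb => h.mem_served_of_abs_sub_lt hs hb)).trans (ncard_served_le j')
  have := h.le_ncard_closedBall_add_ncard_openBall (hX a ha).2.2 hj
  omega

theorem abs_sub_le_radius_of_utility_ne_zero (hu : utility x y K s i ≠ 0) :
    i ∈ served x y K s (s i) ∧ |x i - y (s i)| ≤ r (s i) := by
  obtain ⟨hserved, hne⟩ := mem_served_of_utility_ne_zero hu
  refine ⟨hserved, not_lt.1 fun hout => ?_⟩
  have hsub : {a | |x a - y (s i)| ≤ r (s i) ∧ s a = s i} ⊆ ahead x y s (s i) i :=
    fun a ha => subset_ahead i ⟨ha.1.trans_lt hout, ha.2⟩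
  have hr : r (s i) < 1 := hout.trans ((h.abs_sub_le_one i (s i)).lt_of_ne hne)
  exact (h.le_ncard_chosen hs hr).not_gt ((ncard_le_ncard hsub).trans_lt hserved.2)

theorem utility_eq_zero (hout : ∀ j, r j < |x i - y j|) : utility x y K s i = 0 := by
  by_contra hu
  exact (hout (s i)).not_ge (h.abs_sub_le_radius_of_utility_ne_zero hs hu).2

theorem ncard_served_sphere (hr : r j < 1) :
    {a | a ∈ served x y K s j ∧ |x a - y j| = r j}.ncard
      = K j - {a | |x a - y j| < r j}.ncard := by
  have hsat : {a | |x a - y j| ≤ r j ∧ a ∈ served x y K s j}.ncard = K j := by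
    refine le_antisymm ((ncard_le_ncard fun a ha => ha.2).trans (ncard_served_le j)) ?_
    by_contra! hlt
    have hchosen : {a | |x a - y j| ≤ r j ∧ s a = j}
        ⊆ {a | |x a - y j| ≤ r j ∧ a ∈ served x y K s j} :=
      fun a ha => ⟨ha.1, mem_served_of_ncard_lt hlt ha.1 ha.2⟩
    exact (h.le_ncard_chosen hs hr).not_gt ((ncard_le_ncard hchosen).trans_lt hlt)
  have hopen : {a | |x a - y j| < r j} ⊆ {a | |x a - y j| ≤ r j ∧ a ∈ served x y K s j} :=
    fun a ha => ⟨ha.le, h.mem_served_of_abs_sub_lt hs ha⟩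
  have hdiff : {a | |x a - y j| ≤ r j ∧ a ∈ served x y K s j} \ {a | |x a - y j| < r j}
      = {a | a ∈ served x y K s j ∧ |x a - y j| = r j} := by
    ext a
    simp only [mem_sdiff, mem_ofPred_eq, not_lt]
    constructor
    · exact fun ⟨⟨hle, hserved⟩, hge⟩ => ⟨hserved, le_antisymm hle hge⟩
    · exact fun ⟨hserved, heq⟩ => ⟨⟨heq.le, hserved⟩, heq.ge⟩
  rw [← hdiff, ncard_sdiff hopen, hsat]

theorem sphere_utility_eq_sum (i : Fin n) :
    (if ∃ j, |x i - y j| = r j then utility x y K s i else 0)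
      = ∑ j, if i ∈ served x y K s j ∧ |x i - y j| = r j then 1 - r j else 0 := by
  rw [Finset.sum_eq_single (s i) (fun j _ hj => if_neg fun hi => hj hi.1.1.symm) (by simp)]
  by_cases hi : i ∈ served x y K s (s i) ∧ |x i - y (s i)| = r (s i)
  · rw [if_pos ⟨s i, hi.2⟩, if_pos hi, utility_of_mem_served hi.1, hi.2]
  rw [if_neg hi]
  split_ifs with hsphere
  · by_contra hu
    obtain ⟨hserved, hle⟩ := h.abs_sub_le_radius_of_utility_ne_zero hs hu
    exact h.not_exists_eq_of_lt (hle.lt_of_ne fun he => hi ⟨hserved, he⟩) hsphere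
  · rfl

theorem sum_sphere_utility :
    (∑ i, if ∃ j, |x i - y j| = r j then utility x y K s i else 0)
      = ∑ j, ((K j : ℝ) - {a | |x a - y j| < r j}.ncard) * (1 - r j) := by
  simp only [h.sphere_utility_eq_sum hs]
  rw [Finset.sum_comm]
  refine Finset.sum_congr rfl fun j _ => ?_
  rw [Finset.sum_ite, Finset.sum_const_zero, add_zero, Finset.sum_const, nsmul_eq_mul]
  rcases (h.radius_le_one j).lt_or_eq with hr | hr
  · have hcard := h.ncard_served_sphere hs hr
    have hle : {a | |x a - y j| < r j}.ncard ≤ K j := (h.ncard_openBall_lt j).le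
    rw [← ncard_coe_finset, Finset.coe_filter_univ, hcard, Nat.cast_sub hle]
  · simp [hr]

theorem utility_eq_of_not_exists_eq (hs' : isNE x y K s') (hi : ¬ ∃ j, |x i - y j| = r j) :
    utility x y K s i = utility x y K s' i := by
  by_cases hin : ∃ j, |x i - y j| < r j
  · obtain ⟨j, hj⟩ := hin
    rw [h.utility_eq_of_abs_sub_lt hs hj, h.utility_eq_of_abs_sub_lt hs' hj]
  · push Not at hin hi
    have hout j : r j < |x i - y j| := (hin j).lt_of_ne' (hi j)
    rw [h.utility_eq_zero hs hout, h.utility_eq_zero hs' hout]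

theorem SW_eq (hs' : isNE x y K s') : SW x y K s = SW x y K s' := by
  have hsplit (t : Fin n → Fin 2) : SW x y K t
      = (∑ i, if ∃ j, |x i - y j| = r j then utility x y K t i else 0)
        + ∑ i, if ∃ j, |x i - y j| = r j then 0 else utility x y K t i := by
    rw [SW, ← Finset.sum_add_distrib]
    exact Finset.sum_congr rfl fun i _ => by split_ifs <;> simp
  rw [hsplit, hsplit, h.sum_sphere_utility hs, h.sum_sphere_utility hs']
  congr 1
  exact Finset.sum_congr rfl fun i _ => by
    split_ifs with hi
    · rfl
    · exact h.utility_eq_of_not_exists_eq hs hs' hi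

end WideGapConfig

end TwoFacilities

section Percentile

section SortedTuple

variable {α : Type*} [LinearOrder α]

theorem ncard_setOf_eq_card_comp_sort (f : Fin n → α) (p : α → Prop) [DecidablePred p] :
    {i | p (f i)}.ncard = (Finset.univ.filter fun i => p ((f ∘ Tuple.sort f) i)).card := by
  rw [← ncard_coe_finset, Finset.coe_filter_univ]
  exact (ncard_preimage_of_injective_subset_range (Tuple.sort f).injective
    (by rw [Equiv.range_eq_univ]; exact subset_univ _)).symm

theorem lt_ncard_le_iff (f : Fin n → α) (m : Fin n) (a : α) :
    (m : ℕ) < {i | f i ≤ a}.ncard ↔ f (Tuple.sort f m) ≤ a := by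
  rw [ncard_setOf_eq_card_comp_sort f (· ≤ a)]
  exact Tuple.lt_card_le_iff_apply_le_of_monotone (Tuple.monotone_sort f)

theorem lt_ncard_lt_iff (f : Fin n → α) (m : Fin n) (a : α) :
    (m : ℕ) < {i | f i < a}.ncard ↔ f (Tuple.sort f m) < a := by
  rw [ncard_setOf_eq_card_comp_sort f (· < a)]
  exact Tuple.lt_card_lt_iff_apply_lt_of_monotone (Tuple.monotone_sort f)

/-- The infimum is attained at the `k`-th smallest value of `d`. -/
theorem isCriticalRadius_sInf {d : Fin n → ℝ} (hd : ∀ i, 0 ≤ d i) {k : ℕ} (hk : 0 < k)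
    (hkn : k ≤ n) : IsCriticalRadius d k (sInf {ρ | 0 ≤ ρ ∧ k ≤ {i | d i ≤ ρ}.ncard}) := by
  have hm : k - 1 < n := by omega
  have hleast : IsLeast {ρ | 0 ≤ ρ ∧ k ≤ {i | d i ≤ ρ}.ncard} (d (Tuple.sort d ⟨k - 1, hm⟩)) := by
    refine ⟨⟨hd _, ?_⟩, fun ρ hρ => (lt_ncard_le_iff d _ ρ).1 ?_⟩
    · have := (lt_ncard_le_iff d ⟨k - 1, hm⟩ _).2 le_rfl
      simp only at this
      omega
    · have := hρ.2
      simp only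
      omega
  rw [hleast.csInf_eq]
  have hclosed := (lt_ncard_le_iff d ⟨k - 1, hm⟩ _).2 le_rfl
  have hopen := (lt_ncard_lt_iff d ⟨k - 1, hm⟩ _).not.2 (lt_irrefl _)
  simp only at hclosed hopen
  exact ⟨by omega, by omega⟩

theorem le_ncard_Icc_sort (x : Fin n → α) (a b : Fin n) :
    (b : ℕ) + 1 - a ≤ {i | x i ∈ Icc (x (Tuple.sort x a)) (x (Tuple.sort x b))}.ncard := by
  have hle := (lt_ncard_le_iff x b _).2 le_rfl
  have hlt := (lt_ncard_lt_iff x a _).not.2 (lt_irrefl _)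
  have hcover : {i | x i ≤ x (Tuple.sort x b)} ⊆
      {i | x i < x (Tuple.sort x a)} ∪ {i | x i ∈ Icc (x (Tuple.sort x a)) (x (Tuple.sort x b))} :=
    fun i hi => (lt_or_ge (x i) _).imp id fun h => ⟨h, hi⟩
  have := (ncard_le_ncard hcover).trans (ncard_union_le _ _)
  omega

end SortedTuple

theorem exists_percLoc_eq_sort (x : Fin n → ℝ) {v : ℝ} (hv : v ∈ Icc (0 : ℝ) 1) (hn : 0 < n) :
    ∃ a : Fin n, (a : ℤ) = ⌊((n : ℝ) - 1) * v⌋ ∧ percLoc x v = x (Tuple.sort x a) := by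
  have hn1 : (0 : ℝ) ≤ n - 1 := by
    rw [sub_nonneg]; exact_mod_cast hn
  have h0 : 0 ≤ ⌊((n : ℝ) - 1) * v⌋ := Int.floor_nonneg.2 (mul_nonneg hn1 hv.1)
  have hlt : ⌊((n : ℝ) - 1) * v⌋ < n := Int.floor_lt.2 (by push_cast; nlinarith [hv.2])
  have ha : ⌊((n : ℝ) - 1) * v⌋.toNat < n := by omega
  exact ⟨⟨_, ha⟩, by simp [h0], by simp [percLoc, sortedVal, ha]⟩

theorem wideGapConfig_PM {k₁ k₂ : ℕ} (hk : k₂ ≤ k₁) (hk₂ : 0 < k₂) (hn : k₁ + k₂ < n)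
    {v : Fin 2 → ℝ} (hv : ∀ j, v j ∈ Icc (0 : ℝ) 1)
    (hgap : (k₁ : ℤ) + k₂ - 1 ≤ ⌊((n : ℝ) - 1) * v 1⌋ - ⌊((n : ℝ) - 1) * v 0⌋)
    {x : Fin n → ℝ} (hx : InUnit x) {r : Fin 2 → ℝ}
    (hr : ∀ j, r j = sInf {ρ : ℝ | 0 ≤ ρ ∧ ![k₁, k₂] j ≤ {i | |x i - PM v x j| ≤ ρ}.ncard}) :
    WideGapConfig x (PM v x) ![k₁, k₂] r := by
  obtain ⟨a, ha, hya⟩ := exists_percLoc_eq_sort x (hv 0) (by omega)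
  obtain ⟨b, hb, hyb⟩ := exists_percLoc_eq_sort x (hv 1) (by omega)
  have hy : ∀ j, PM v x j ∈ Icc (0 : ℝ) 1 := Fin.forall_fin_two.2
    ⟨show percLoc x (v 0) ∈ _ from hya ▸ hx _, show percLoc x (v 1) ∈ _ from hyb ▸ hx _⟩
  refine ⟨fun i j => abs_sub_le_of_nonneg_of_le (hx i).1 (hx i).2 (hy j).1 (hy j).2,
    fun j => ?_, ?_⟩
  · rw [hr j]
    exact isCriticalRadius_sInf (fun i => abs_nonneg _) (by fin_cases j <;> simp <;> omega)
      (by fin_cases j <;> simp <;> omega)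
  · have := le_ncard_Icc_sort x a b
    simp only [PM, hya, hyb, Matrix.cons_val_zero, Matrix.cons_val_one]
    omega

end Percentile

end FCFS

theorem ES_WG_NE_structure_general (n k₁ k₂ : ℕ) (hk : k₂ ≤ k₁) (hk₂ : 0 < k₂)
    (hn : k₁ + k₂ < n)
    (v : Fin 2 → ℝ) (hv : ∀ j, v j ∈ Set.Icc (0 : ℝ) 1)
    (hgap : (k₁ : ℤ) + k₂ - 1 ≤ ⌊((n : ℝ) - 1) * v 1⌋ - ⌊((n : ℝ) - 1) * v 0⌋)
    (x : Fin n → ℝ) (hx : InUnit x)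
    (y : Fin 2 → ℝ) (hy : y = PM v x) (hylt : y 0 < y 1)
    (r : Fin 2 → ℝ)
    (hr : ∀ j, r j = sInf {ρ : ℝ | 0 ≤ ρ ∧ ![k₁, k₂] j ≤ {i | |x i - y j| ≤ ρ}.ncard}) :
    r 0 + r 1 ≤ |y 0 - y 1| ∧
    (∀ s, isNE x y ![k₁, k₂] s → ∀ (i : Fin n) (j : Fin 2), |x i - y j| < r j →
      utility x y ![k₁, k₂] s i = 1 - |x i - y j|) ∧
    (∀ s, isNE x y ![k₁, k₂] s → ∀ i : Fin n,
      r 0 < |x i - y 0| → r 1 < |x i - y 1| → utility x y ![k₁, k₂] s i = 0) ∧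
    (∀ s s', isNE x y ![k₁, k₂] s → isNE x y ![k₁, k₂] s' →
      (∑ i : Fin n, if |x i - y 0| = r 0 ∨ |x i - y 1| = r 1 then
          utility x y ![k₁, k₂] s i else 0) =
      (∑ i : Fin n, if |x i - y 0| = r 0 ∨ |x i - y 1| = r 1 then
          utility x y ![k₁, k₂] s' i else 0)) ∧
    (∀ s s', isNE x y ![k₁, k₂] s → isNE x y ![k₁, k₂] s' →
      SW x y ![k₁, k₂] s = SW x y ![k₁, k₂] s') := by
  subst hy
  have h := FCFS.wideGapConfig_PM hk hk₂ hn hv hgap hx hr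
  refine ⟨?_, fun s hs i j hi => h.utility_eq_of_abs_sub_lt hs hi,
    fun s hs i h0 h1 => h.utility_eq_zero hs (Fin.forall_fin_two.2 ⟨h0, h1⟩),
    fun s s' hs hs' => ?_, fun s s' hs hs' => h.SW_eq hs hs'⟩
  · rw [abs_sub_comm, abs_of_pos (sub_pos.2 hylt)]
    exact h.radius_add_le
  · have hsum := h.sum_sphere_utility hs
    rw [← h.sum_sphere_utility hs'] at hsum
    simpa only [Fin.exists_fin_two] using hsum

/-- Structure of the Nash equilibria induced by an Equilibrium Stable
Wide-Gap percentile mechanism for two facilities: with `y = PM_v(x)`, `y₁ < y₂`, and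
`r j` the minimal radius whose closed ball around `y j` contains at least `k j` agents,
one has `r₁ + r₂ ≤ |y₁ - y₂|`; in every pure NE, agents strictly inside a ball are served
by the corresponding facility, agents strictly outside both balls get utility `0`, the
total utility of the boundary agents is the same across all pure NE, and hence all pure
NE yield the same Social Welfare. -/
theorem ES_WG_NE_structure (n k₁ k₂ : ℕ) (hk : k₂ ≤ k₁) (hk₂ : 0 < k₂)
    (hn : k₁ + k₂ < n)
    (v : Fin 2 → ℝ) (hv : ∀ j, v j ∈ Set.Icc (0 : ℝ) 1) (hlt : v 0 < v 1)
    (hgap : (k₁ : ℤ) + k₂ - 1 ≤ ⌊((n : ℝ) - 1) * v 1⌋ - ⌊((n : ℝ) - 1) * v 0⌋)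
    (x : Fin n → ℝ) (hx : InUnit x)
    (y : Fin 2 → ℝ) (hy : y = PM v x) (hylt : y 0 < y 1)
    (r : Fin 2 → ℝ)
    (hr : ∀ j, r j = sInf {ρ : ℝ | 0 ≤ ρ ∧ ![k₁, k₂] j ≤ {i | |x i - y j| ≤ ρ}.ncard}) :
    r 0 + r 1 ≤ |y 0 - y 1| ∧
    (∀ s, isNE x y ![k₁, k₂] s → ∀ (i : Fin n) (j : Fin 2), |x i - y j| < r j →
      utility x y ![k₁, k₂] s i = 1 - |x i - y j|) ∧
    (∀ s, isNE x y ![k₁, k₂] s → ∀ i : Fin n,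
      r 0 < |x i - y 0| → r 1 < |x i - y 1| → utility x y ![k₁, k₂] s i = 0) ∧
    (∀ s s', isNE x y ![k₁, k₂] s → isNE x y ![k₁, k₂] s' →
      (∑ i : Fin n, if |x i - y 0| = r 0 ∨ |x i - y 1| = r 1 then
          utility x y ![k₁, k₂] s i else 0) =
      (∑ i : Fin n, if |x i - y 0| = r 0 ∨ |x i - y 1| = r 1 then
          utility x y ![k₁, k₂] s' i else 0)) ∧
    (∀ s s', isNE x y ![k₁, k₂] s → isNE x y ![k₁, k₂] s' →
      SW x y ![k₁, k₂] s = SW x y ![k₁, k₂] s') :=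
  ES_WG_NE_structure_general n k₁ k₂ hk hk₂ hn v hv hgap x hx y hy hylt r hr
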